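/- Let A be a finite-dimensional hereditary algebra over a field k (every left ideal of A is projective as a left A-module; equivalently, every right ideal is projective as a right A-module). For any two two-sided ideals I and J of A, the A-A-bimodule map I ⊗_A J → A induced by multiplication is injective, and its image is the product ideal IJ; in particular I ⊗_A J ≅ IJ as A-A-bimodules, so that the dual projection functors satisfy Dp_I ∘ Dp_J ≅ Dp_{IJ}, where Dp_I denotes the right exact endofunctor I ⊗_A − of the category of finite-dimensional left A-modules. -/

import Mathlib

/-!
A left ideal `J` that is projective over `A` has a dual basis: a left `A`-linear
`σ : J → A^(ι)` and `e : ι → J` with `y = ∑ σ(y)ᵢ eᵢ`. For a right ideal `I`, send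
`x ⊗ y ∈ I ⊗_k J` to the family `(x σ(y)ᵢ)ᵢ ∈ I^(ι)`. Reassembling the family as
`∑ x σ(y)ᵢ ⊗ eᵢ` recovers `x ⊗ y` modulo the balancing relations, while its image in
`A^(ι)` is `σ(xy)`; so every element killed by multiplication is a balancing relation.
This is the flatness argument `I ⊗_A J ↪ A ⊗_A J = J` made explicit.
-/

open TensorProduct

/-- The multiplication map `I ⊗_k J → A` for two `k`-subspaces `I`, `J` of a
`k`-algebra `A`. -/
noncomputable def mulMap (k A : Type) [CommRing k] [Ring A] [Algebra k A]
    (I J : Submodule k A) : (↥I ⊗[k] ↥J) →ₗ[k] A :=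
  TensorProduct.lift (LinearMap.compl₁₂ (LinearMap.mul k A) I.subtype J.subtype)

/-- The submodule of `I ⊗_k J` spanned by the "balancing" relators `xa ⊗ y - x ⊗ ay`;
the quotient of `I ⊗_k J` by it is the tensor product `I ⊗_A J` of the right `A`-module
`I` with the left `A`-module `J`.  Hence the `A`-`A`-bimodule map `I ⊗_A J → A` induced
by multiplication is injective if and only if the kernel of `mulMap` equals `balRel`. -/
noncomputable def balRel (k A : Type) [CommRing k] [Ring A] [Algebra k A]
    (I J : Submodule k A) : Submodule k (↥I ⊗[k] ↥J) :=
  Submodule.span k {z | ∃ (b : I) (d : J) (a : A) (h1 : (b : A) * a ∈ I) (h2 : a * (d : A) ∈ J),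
    z = (⟨(b : A) * a, h1⟩ : I) ⊗ₜ[k] d - (b ⊗ₜ[k] (⟨a * (d : A), h2⟩ : J))}

section

variable {k A : Type} [CommRing k] [Ring A] [Algebra k A]

theorem mulMap_eq_submodule_mulMap (I J : Submodule k A) : mulMap k A I J = I.mulMap J := rfl

theorem range_mulMap (I J : Submodule k A) : LinearMap.range (mulMap k A I J) = I * J :=
  Submodule.mulMap_range I J

theorem balRel_le_ker_mulMap (I J : Submodule k A) :
    balRel k A I J ≤ LinearMap.ker (mulMap k A I J) := by
  rw [balRel, Submodule.span_le]
  rintro _ ⟨x, y, a, hxa, hay, rfl⟩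
  simp [mulMap_eq_submodule_mulMap, mul_assoc]

theorem mkQ_balRel_mul_tmul (I J : Submodule k A) (x : I) (y : J) (a : A)
    (hxa : (x : A) * a ∈ I) (hay : a * (y : A) ∈ J) :
    (balRel k A I J).mkQ ((⟨(x : A) * a, hxa⟩ : I) ⊗ₜ y) =
      (balRel k A I J).mkQ (x ⊗ₜ (⟨a * (y : A), hay⟩ : J)) := by
  rw [← sub_eq_zero, ← map_sub, Submodule.mkQ_apply, Submodule.Quotient.mk_eq_zero]
  exact Submodule.subset_span ⟨x, y, a, hxa, hay, rfl⟩

theorem mul_le_right_of_left_mul_mem (I : Submodule k A) {J : Submodule k A}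
    (hJ : ∀ a : A, ∀ y ∈ J, a * y ∈ J) : I * J ≤ J :=
  Submodule.mul_le.2 fun x _ y hy => hJ x y hy

def leftIdealOf (J : Submodule k A) (hJ : ∀ a : A, ∀ y ∈ J, a * y ∈ J) : Ideal A :=
  { J with smul_mem' := fun a _ hy => hJ a _ hy }

theorem exists_dualBasis_of_projective {J : Submodule k A} (hJ : ∀ a : A, ∀ y ∈ J, a * y ∈ J)
    [Module.Projective A (leftIdealOf J hJ)] :
    ∃ (ι : Type) (σ : J →ₗ[k] ι →₀ A) (e : ι → J),
      (∀ (a : A) (y : J), σ ⟨a * y, hJ a y y.2⟩ = a • σ y) ∧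
      ∀ y : J, ((σ y).sum fun i c => c * e i) = y := by
  obtain ⟨s, hs⟩ := Module.projective_def.1 (inferInstance : Module.Projective A (leftIdealOf J hJ))
  let toIdeal : J →ₗ[k] leftIdealOf J hJ :=
    { toFun y := ⟨y, y.2⟩
      map_add' _ _ := rfl
      map_smul' _ _ := rfl }
  refine ⟨leftIdealOf J hJ, s.restrictScalars k ∘ₗ toIdeal, fun i => ⟨i, i.2⟩,
    fun a y => map_smul s a ⟨y, y.2⟩, fun y => ?_⟩
  have h := congrArg Subtype.val (hs (toIdeal y))
  simp only [Finsupp.linearCombination_apply, Finsupp.sum, id_eq, Submodule.coe_sum,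
    Submodule.coe_smul, smul_eq_mul] at h
  exact h

variable {I J : Submodule k A} {ι : Type}

def rightIdealMulLeft (hI : ∀ a : A, ∀ x ∈ I, x * a ∈ I) (x : I) : A →ₗ[k] I where
  toFun a := ⟨x * a, hI a x x.2⟩
  map_add' _ _ := Subtype.ext (mul_add _ _ _)
  map_smul' _ _ := Subtype.ext (mul_smul_comm _ _ _)

noncomputable def mulCoords (hI : ∀ a : A, ∀ x ∈ I, x * a ∈ I) (σ : J →ₗ[k] ι →₀ A) :
    I ⊗[k] J →ₗ[k] (ι →₀ I) :=
  TensorProduct.lift <| LinearMap.mk₂ k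
    (fun x y => Finsupp.mapRange.linearMap (rightIdealMulLeft hI x) (σ y))
    (fun x₁ x₂ y => by ext; simp [rightIdealMulLeft, add_mul])
    (fun c x y => by ext; simp [rightIdealMulLeft])
    (fun x y₁ y₂ => by simp only [map_add])
    (fun c x y => by simp only [map_smul])

theorem mulCoords_tmul_apply (hI : ∀ a : A, ∀ x ∈ I, x * a ∈ I) (σ : J →ₗ[k] ι →₀ A)
    (x : I) (y : J) (i : ι) : (mulCoords hI σ (x ⊗ₜ y) i : A) = x * σ y i := rfl

theorem mulCoords_eq_zero_of_mulMap_eq_zero (hI : ∀ a : A, ∀ x ∈ I, x * a ∈ I)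
    (hJ : ∀ a : A, ∀ y ∈ J, a * y ∈ J) {σ : J →ₗ[k] ι →₀ A}
    (hσ : ∀ (a : A) (y : J), σ ⟨a * y, hJ a y y.2⟩ = a • σ y)
    {z : I ⊗[k] J} (hz : mulMap k A I J z = 0) : mulCoords hI σ z = 0 := by
  let μ : I ⊗[k] J →ₗ[k] J := (mulMap k A I J).codRestrict J fun z =>
    mul_le_right_of_left_mul_mem I hJ (range_mulMap I J ▸ LinearMap.mem_range_self _ z)
  have hcoords : Finsupp.mapRange.linearMap I.subtype ∘ₗ mulCoords hI σ = σ ∘ₗ μ := by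
    refine TensorProduct.ext' fun x y => ?_
    ext i
    have hμ : μ (x ⊗ₜ y) = ⟨x * y, hJ x y y.2⟩ := rfl
    simp only [LinearMap.comp_apply, hμ, hσ]
    exact mulCoords_tmul_apply hI σ x y i
  have h := LinearMap.congr_fun hcoords z
  simp only [LinearMap.comp_apply, show μ z = 0 from Subtype.ext hz, map_zero] at h
  exact Finsupp.mapRange_injective _ (map_zero _) I.subtype_injective (by simpa using h)

theorem mkQ_balRel_reassemble_mulCoords (hI : ∀ a : A, ∀ x ∈ I, x * a ∈ I)
    (hJ : ∀ a : A, ∀ y ∈ J, a * y ∈ J) {σ : J →ₗ[k] ι →₀ A} {e : ι → J}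
    (he : ∀ y : J, ((σ y).sum fun i c => c * e i) = y) (z : I ⊗[k] J) :
    (balRel k A I J).mkQ
        (Finsupp.lsum k (fun i => (TensorProduct.mk k I J).flip (e i)) (mulCoords hI σ z)) =
      (balRel k A I J).mkQ z := by
  induction z using TensorProduct.induction_on with
  | zero => simp
  | add z w hz hw => simp only [map_add, hz, hw]
  | tmul x y =>
    have hy : (σ y).sum (fun i c => (⟨c * e i, hJ c _ (e i).2⟩ : J)) = y :=
      Subtype.ext (by simpa [Finsupp.sum] using he y)
    calc _ = (σ y).sum fun i c => (balRel k A I J).mkQ (rightIdealMulLeft hI x c ⊗ₜ e i) := by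
          simp [mulCoords, Finsupp.sum_mapRange_index, map_finsuppSum]
      _ = (σ y).sum fun i c => (balRel k A I J).mkQ (x ⊗ₜ (⟨c * e i, hJ c _ (e i).2⟩ : J)) :=
          Finsupp.sum_congr fun i _ => mkQ_balRel_mul_tmul I J x (e i) _ _ _
      _ = (balRel k A I J).mkQ (x ⊗ₜ (σ y).sum fun i c => (⟨c * e i, hJ c _ (e i).2⟩ : J)) := by
          rw [Finsupp.sum, Finsupp.sum, tmul_sum, map_sum]
      _ = _ := by rw [hy]

theorem ker_mulMap_le_balRel (hI : ∀ a : A, ∀ x ∈ I, x * a ∈ I)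
    (hJ : ∀ a : A, ∀ y ∈ J, a * y ∈ J) [Module.Projective A (leftIdealOf J hJ)] :
    LinearMap.ker (mulMap k A I J) ≤ balRel k A I J := by
  intro z hz
  obtain ⟨ι, σ, e, hσ, he⟩ := exists_dualBasis_of_projective hJ
  have h := mkQ_balRel_reassemble_mulCoords hI hJ he z
  rwa [mulCoords_eq_zero_of_mulMap_eq_zero hI hJ hσ hz, map_zero, map_zero, eq_comm,
    Submodule.mkQ_apply, Submodule.Quotient.mk_eq_zero] at h

end

theorem statement19_general (k A : Type) [Field k] [Ring A] [Algebra k A]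
    (hhered : ∀ I : Ideal A, Module.Projective A ↥I)
    (I J : Submodule k A)
    (hI : (∀ a : A, ∀ x ∈ I, a * x ∈ I) ∧ (∀ a : A, ∀ x ∈ I, x * a ∈ I))
    (hJ : (∀ a : A, ∀ x ∈ J, a * x ∈ J) ∧ (∀ a : A, ∀ x ∈ J, x * a ∈ J)) :
    LinearMap.ker (mulMap k A I J) = balRel k A I J ∧
    LinearMap.range (mulMap k A I J) = I * J := by
  have := hhered (leftIdealOf J hJ.1)
  exact ⟨le_antisymm (ker_mulMap_le_balRel hI.2 hJ.1) (balRel_le_ker_mulMap I J),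
    range_mulMap I J⟩

/-- STATEMENT 19: let `A` be a finite-dimensional hereditary algebra over a field `k`
(every left ideal of `A` is projective as a left `A`-module).  For any two two-sided
ideals `I`, `J` of `A`, the `A`-`A`-bimodule map `I ⊗_A J → A` induced by
multiplication is injective (the kernel of the multiplication map `I ⊗_k J → A` is
exactly the submodule of balancing relators defining `I ⊗_A J`), and its image is the
product ideal `IJ`.  In particular `I ⊗_A J ≅ IJ` as `A`-`A`-bimodules, so the dual
projection functors `Dp_I = I ⊗_A -` satisfy `Dp_I ∘ Dp_J ≅ Dp_{IJ}`. -/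
theorem statement19 (k A : Type) [Field k] [Ring A] [Algebra k A] [FiniteDimensional k A]
    (hhered : ∀ I : Ideal A, Module.Projective A ↥I)
    (I J : Submodule k A)
    (hI : (∀ a : A, ∀ x ∈ I, a * x ∈ I) ∧ (∀ a : A, ∀ x ∈ I, x * a ∈ I))
    (hJ : (∀ a : A, ∀ x ∈ J, a * x ∈ J) ∧ (∀ a : A, ∀ x ∈ J, x * a ∈ J)) :
    LinearMap.ker (mulMap k A I J) = balRel k A I J ∧
    LinearMap.range (mulMap k A I J) = I * J :=
  statement19_general k A hhered I J hI hJ
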